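/- The group G presented by ⟨a, b ∣ a² = b²⟩ is nonabelian; in particular, the images α, β of the two generators in G satisfy α * β ≠ β * α, so the commutator word αβα⁻¹β⁻¹ represents a nontrivial element of G. -/
import Mathlib


/-- The single relator `a * a * b⁻¹ * b⁻¹` presenting `⟨a, b ∣ a² = b²⟩`. -/
def rels : Set (FreeGroup (Fin 2)) :=
  {FreeGroup.of 0 * FreeGroup.of 0 * (FreeGroup.of 1)⁻¹ * (FreeGroup.of 1)⁻¹}

def qf : Fin 2 → QuaternionGroup 2 :=
  ![QuaternionGroup.a 1, QuaternionGroup.xa 0]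

lemma qf_rel : ∀ r ∈ rels, FreeGroup.lift qf r = 1 := by
  intro r hr
  rcases hr with rfl
  simp only [map_mul, map_inv, FreeGroup.lift_apply_of, qf]
  decide

/-- The group `G = ⟨a, b ∣ a² = b²⟩` is nonabelian: the images `α, β` of the
generators do not commute, so the commutator `αβα⁻¹β⁻¹` is nontrivial. -/
theorem presented_a2_eq_b2_nonabelian :
    (PresentedGroup.of (rels := rels) 0) * (PresentedGroup.of (rels := rels) 1)
        ≠ (PresentedGroup.of (rels := rels) 1) * (PresentedGroup.of (rels := rels) 0)
    ∧ (PresentedGroup.of (rels := rels) 0) * (PresentedGroup.of (rels := rels) 1)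
        * (PresentedGroup.of (rels := rels) 0)⁻¹
        * (PresentedGroup.of (rels := rels) 1)⁻¹ ≠ 1 := by
  have key : (PresentedGroup.of (rels := rels) 0) * (PresentedGroup.of (rels := rels) 1)
      ≠ (PresentedGroup.of (rels := rels) 1) * (PresentedGroup.of (rels := rels) 0) := by
    intro h
    have := congrArg (PresentedGroup.toGroup qf_rel) h
    simp only [map_mul, PresentedGroup.toGroup.of, qf] at this
    exact absurd this (by decide)
  refine ⟨key, fun h => key ?_⟩
  have := congrArg (· * (PresentedGroup.of (rels := rels) 1)) h
  simpa [mul_assoc] using congrArg (· * (PresentedGroup.of (rels := rels) 0)) this
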